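/- Let f, g : Set X → Set X be monotone, suppose g lies below the companion t of b (g S ⊆ t S for every S : Set X), and suppose f progresses to f ∘ g, i.e., f (b S) ⊆ b (f (g S)) for every S : Set X. Then f is b-sound: gfp (b ∘ f) ⊆ gfp b. -/
import Mathlib


variable {X : Type*}

/-- The greatest fixed point of a monotone function on sets: union of all post-fixed points. -/
def gfp (h : Set X → Set X) : Set X := ⋃₀ {S | S ⊆ h S}

/-- `f` progresses to `g` with respect to `b`. -/
def Progresses (b f g : Set X → Set X) : Prop := ∀ S, f (b S) ⊆ b (g S)

/-- `f` is `b`-compatible: `f` progresses to itself. -/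
def Compatible (b f : Set X → Set X) : Prop := Progresses b f f

/-- The companion of `b`: pointwise join of all monotone `b`-compatible functions. -/
def companion (b : Set X → Set X) (S : Set X) : Set X :=
  ⋃₀ {T | ∃ f : Set X → Set X, Monotone f ∧ Compatible b f ∧ T = f S}

lemma le_companion {b f : Set X → Set X} (hf : Monotone f) (hc : Compatible b f)
    (S : Set X) : f S ⊆ companion b S :=
  Set.subset_sUnion_of_mem ⟨f, hf, hc, rfl⟩

lemma companion_mono (b : Set X → Set X) : Monotone (companion b) := by
  intro S T hST x hx
  obtain ⟨U, ⟨f, hfm, hfc, rfl⟩, hxU⟩ := hx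
  exact Set.mem_sUnion.2 ⟨f T, ⟨f, hfm, hfc, rfl⟩, hfm hST hxU⟩

lemma companion_compat {b : Set X → Set X} (hb : Monotone b) :
    Compatible b (companion b) := by
  intro S x hx
  obtain ⟨U, ⟨f, hfm, hfc, rfl⟩, hxU⟩ := hx
  exact hb (le_companion hfm hfc S) (hfc S hxU)

/-- Pointwise soundness of compatible functions. -/
lemma compat_sound {b h : Set X → Set X} (hb : Monotone b) (hm : Monotone h)
    (hc : Compatible b h) {S : Set X} (hS : S ⊆ b (h S)) : S ⊆ gfp b := by
  set T : Set X := ⋃ n, h^[n] S with hT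
  have key : ∀ n, h^[n] S ⊆ b (h^[n + 1] S) := by
    intro n
    induction n with
    | zero => simpa using hS
    | succ n ih =>
      simp only [Function.iterate_succ_apply'] at ih ⊢
      exact (hm ih).trans (hc _)
  have hTsub : T ⊆ b T := by
    intro x hx
    obtain ⟨_, ⟨n, rfl⟩, hxn⟩ := hx
    exact hb (Set.subset_iUnion (fun n => h^[n] S) (n + 1)) (key n hxn)
  intro x hx
  exact Set.mem_sUnion.2 ⟨T, hTsub, Set.mem_iUnion.2 ⟨0, by simpa using hx⟩⟩

theorem progress_comp_sound {X : Type*} (b f g : Set X → Set X)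
    (hb : Monotone b) (hf : Monotone f) (hg : Monotone g)
    (hgle : ∀ S : Set X, g S ⊆ companion b S)
    (h : ∀ S : Set X, f (b S) ⊆ b (f (g S))) :
    gfp (b ∘ f) ⊆ gfp b := by
  have hid : ∀ S : Set X, S ⊆ companion b S := fun S =>
    le_companion (b := b) monotone_id (fun S => subset_rfl) S
  have htm := companion_mono b
  have htc := companion_compat hb
  -- f ∘ companion b is compatible
  have hcomp : Compatible b (f ∘ companion b) := by
    intro S
    calc f (companion b (b S)) ⊆ f (b (companion b S)) := hf (htc S)
      _ ⊆ b (f (g (companion b S))) := h _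
      _ ⊆ b (f (companion b (companion b S))) := hb (hf (hgle _))
      _ ⊆ b (f (companion b S)) := by
            refine hb (hf ?_)
            have htt : Compatible b (companion b ∘ companion b) := fun S =>
              (htm (htc S)).trans (htc _)
            exact le_companion (htm.comp htm) htt S
  have hmono : Monotone (f ∘ companion b) := hf.comp htm
  intro x hx
  obtain ⟨S, hS, hxS⟩ := hx
  have hS' : S ⊆ b ((f ∘ companion b) S) := fun y hy => hb (hf (hid S)) (hS hy)
  exact compat_sound hb hmono hcomp hS' hxS
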